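/- arXiv:1902.00102 — 3 statements merged into one kernel-verified Lean document; each statement's English description precedes it below -/
import Mathlib

section
/- Let R be a commutative ring, let A₁ be an n×n matrix and A₂ an m×m matrix over R, let u be a row/column index of A₁ and v a row/column index of A₂, and let b, c ∈ R. Let M be the (n+m)×(n+m) block matrix whose upper-left block is A₁, whose lower-right block is A₂, whose upper-right block has the single nonzero entry b in position (u,v), and whose lower-left block has the single nonzero entry c in position (v,u). Then det M = det A₁ · det A₂ − b·c · det(A₁ with row and column u deleted) · det(A₂ with row and column v deleted). -/
/-!
Split the column `Sum.inl u` into its `A₁`-part and the entry `c`: the part without `c` is block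
triangular, with determinant `det A₁ * det A₂`. In the part with `c`, split the column
`Sum.inr v` into the entry `b` and its `A₂`-part; the latter gives a block triangular matrix
whose `A₁`-block has a zero column. Exchanging the two columns of what remains (sign `-1`)
makes it block diagonal, the blocks being `A₁` and `A₂` with columns `u`, `v` replaced by
`b • Pi.single u 1` and `c • Pi.single v 1`, whose determinants are `b` and `c` times the
diagonal cofactors.
-/

open Matrix

section UpdateColFromBlocks

variable {α l m n o : Type*} [DecidableEq l] [DecidableEq m]

theorem updateCol_fromBlocks_inl (A : Matrix n l α) (B : Matrix n m α) (C : Matrix o l α)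
    (D : Matrix o m α) (j : l) (x : n → α) (y : o → α) :
    (fromBlocks A B C D).updateCol (Sum.inl j) (Sum.elim x y)
      = fromBlocks (A.updateCol j x) B (C.updateCol j y) D := by
  ext (i | i) (k | k) <;> simp [updateCol_apply]

theorem updateCol_fromBlocks_inr (A : Matrix n l α) (B : Matrix n m α) (C : Matrix o l α)
    (D : Matrix o m α) (j : m) (x : n → α) (y : o → α) :
    (fromBlocks A B C D).updateCol (Sum.inr j) (Sum.elim x y)
      = fromBlocks A (B.updateCol j x) C (D.updateCol j y) := by
  ext (i | i) (k | k) <;> simp [updateCol_apply]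

end UpdateColFromBlocks

section Determinant

variable {R ι κ : Type*} [CommRing R] [Fintype ι] [DecidableEq ι] [Fintype κ] [DecidableEq κ]

theorem det_updateCol_updateCol_swap (M : Matrix ι ι R) {i j : ι} (hij : i ≠ j) (p q : ι → R) :
    ((M.updateCol i p).updateCol j q).det = -((M.updateCol i q).updateCol j p).det := by
  have hperm : ((M.updateCol i p).updateCol j q).submatrix id (Equiv.swap i j)
      = (M.updateCol i q).updateCol j p := by
    ext k l
    simp only [submatrix_apply, id, updateCol_apply, Equiv.swap_apply_def]
    split_ifs <;> simp_all
  have h := det_permute' (Equiv.swap i j) ((M.updateCol i p).updateCol j q)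
  rw [hperm, Equiv.Perm.sign_swap hij] at h
  simp [h]

theorem det_updateCol_single (A : Matrix ι ι R) (i : ι) (b : R) :
    (A.updateCol i (Pi.single i b)).det = b * adjugate A i i := by
  rw [← mul_one b, ← smul_eq_mul, Pi.single_smul', det_updateCol_smul, smul_eq_mul,
    ← transpose_transpose A, updateCol_transpose, det_transpose, ← adjugate_apply,
    ← adjugate_transpose, transpose_apply, transpose_transpose, mul_one]

theorem det_fromBlocks_single_single (A₁ : Matrix ι ι R) (A₂ : Matrix κ κ R) (u : ι) (v : κ)
    (b c : R) :
    (fromBlocks A₁ (single u v b) (single v u c) A₂).det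
      = A₁.det * A₂.det - b * c * adjugate A₁ u u * adjugate A₂ v v := by
  have hsplit_inl : fromBlocks A₁ (single u v b) (single v u c) A₂
      = (fromBlocks A₁ (single u v b) 0 A₂).updateCol (Sum.inl u)
          (Sum.elim (fun i => A₁ i u) 0 + Sum.elim (0 : ι → R) (Pi.single v c)) := by
    rw [← Sum.elim_add_add, add_zero, zero_add, updateCol_fromBlocks_inl, updateCol_eq_self,
      single_eq_updateCol_zero v u]
  have hsplit_inr : fromBlocks (A₁.updateCol u 0) (single u v b) (single v u c) A₂
      = (fromBlocks (A₁.updateCol u 0) 0 (single v u c) A₂).updateCol (Sum.inr v)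
          (Sum.elim (Pi.single u b) (0 : κ → R) + Sum.elim (0 : ι → R) (fun i => A₂ i v)) := by
    rw [← Sum.elim_add_add, add_zero, zero_add, updateCol_fromBlocks_inr, updateCol_eq_self,
      single_eq_updateCol_zero u v]
  have hcross : (fromBlocks (A₁.updateCol u 0) (single u v b) (single v u c)
      (A₂.updateCol v 0)).det
      = -((A₁.updateCol u (Pi.single u b)).det * (A₂.updateCol v (Pi.single v c)).det) := by
    have hswap := det_updateCol_updateCol_swap
      (fromBlocks (A₁.updateCol u 0) 0 0 (A₂.updateCol v 0)) (Sum.inl_ne_inr (a := u) (b := v))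
      (Sum.elim 0 (Pi.single v c)) (Sum.elim (Pi.single u b) 0)
    simpa only [updateCol_fromBlocks_inl, updateCol_fromBlocks_inr, updateCol_idem,
      updateCol_zero_zero, ← single_eq_updateCol_zero, det_fromBlocks_zero₂₁] using hswap
  have hzero_col : (A₁.updateCol u 0).det = 0 := det_eq_zero_of_column_eq_zero u (by simp)
  calc (fromBlocks A₁ (single u v b) (single v u c) A₂).det
      = A₁.det * A₂.det
          + (fromBlocks (A₁.updateCol u 0) (single u v b) (single v u c) A₂).det := by
        rw [hsplit_inl, det_updateCol_add, updateCol_fromBlocks_inl, updateCol_fromBlocks_inl,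
          updateCol_eq_self, updateCol_zero_zero, det_fromBlocks_zero₂₁,
          ← single_eq_updateCol_zero]
    _ = A₁.det * A₂.det
          - (A₁.updateCol u (Pi.single u b)).det * (A₂.updateCol v (Pi.single v c)).det := by
        rw [hsplit_inr, det_updateCol_add, updateCol_fromBlocks_inr, updateCol_fromBlocks_inr,
          ← single_eq_updateCol_zero, updateCol_eq_self, hcross, updateCol_zero_zero, det_fromBlocks_zero₁₂,
          hzero_col]
        ring
    _ = A₁.det * A₂.det - b * c * adjugate A₁ u u * adjugate A₂ v v := by
        rw [det_updateCol_single, det_updateCol_single]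
        ring

end Determinant

/-- Determinant expansion for a block matrix with a single connecting edge:
the off-diagonal blocks have a single nonzero entry `b` at `(u, v)` and `c` at `(v, u)`. -/
theorem det_single_edge_block {R : Type*} [CommRing R] {n m : ℕ}
    (A₁ : Matrix (Fin (n + 1)) (Fin (n + 1)) R)
    (A₂ : Matrix (Fin (m + 1)) (Fin (m + 1)) R)
    (u : Fin (n + 1)) (v : Fin (m + 1)) (b c : R) :
    (Matrix.fromBlocks A₁
        (Matrix.of fun i j => if i = u ∧ j = v then b else 0)
        (Matrix.of fun i j => if i = v ∧ j = u then c else 0)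
        A₂).det
      = A₁.det * A₂.det
        - b * c * (A₁.submatrix u.succAbove u.succAbove).det
            * (A₂.submatrix v.succAbove v.succAbove).det := by
  have hB : (Matrix.of fun i j => if i = u ∧ j = v then b else 0) = single u v b := by
    ext i j
    simp [single_apply, eq_comm]
  have hC : (Matrix.of fun i j => if i = v ∧ j = u then c else 0) = single v u c := by
    ext i j
    simp [single_apply, eq_comm]
  have hsign (k : ℕ) : (-1 : R) ^ (k + k) = 1 := (Even.add_self k).neg_one_pow
  rw [hB, hC, det_fromBlocks_single_single, adjugate_fin_succ_eq_det_submatrix,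
    adjugate_fin_succ_eq_det_submatrix, hsign, hsign, one_mul, one_mul]
end

section
/- Let R be a commutative ring, let A be a square matrix over R indexed by a finite type V, let v ∈ V, and let c = [c₁, …, c_k] (k ≥ 1) be a list of elements of R. Let G be the matrix indexed by V ⊕ Fin(k−1) obtained by grafting the chain c onto v: G agrees with A on the V×V block except that G(v,v) = A(v,v) + c₁; the added vertices carry diagonal entries c₂, …, c_k; there are entries −1 (in both symmetric positions) between v and the vertex carrying c₂ and between consecutive added vertices; and all other entries are 0. Then det G = |c₂, …, c_k| · det A + |c₁, …, c_k| · det(A with row and column v deleted). -/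
/-- The symmetric tridiagonal matrix with diagonal entries given by the list `L`
and `-1` immediately above and below the diagonal. -/
def triMat {R : Type*} [CommRing R] (L : List R) :
    Matrix (Fin L.length) (Fin L.length) R :=
  Matrix.of fun i j =>
    if (i : ℕ) = (j : ℕ) then L.get i
    else if (i : ℕ) + 1 = (j : ℕ) ∨ (j : ℕ) + 1 = (i : ℕ) then -1 else 0

/-- The tridiagonal determinant `|n₁, …, n_k|`; the determinant of the empty list is `1`. -/
def tridet {R : Type*} [CommRing R] (L : List R) : R := (triMat L).det

/-- The matrix obtained from `A` by grafting the chain `c₁ :: rest` onto the vertex `v`: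
the diagonal entry at `v` becomes `A v v + c₁`, the added vertices carry diagonal entries
from `rest`, the vertex `v` is joined by `-1` to the first added vertex, and consecutive
added vertices are joined by `-1`. -/
def graftChain {R : Type*} [CommRing R] {V : Type*} [DecidableEq V]
    (A : Matrix V V R) (v : V) (c₁ : R) (rest : List R) :
    Matrix (V ⊕ Fin rest.length) (V ⊕ Fin rest.length) R :=
  Matrix.of fun x y =>
    match x, y with
    | .inl w, .inl w' => if w = v ∧ w' = v then A v v + c₁ else A w w'
    | .inl w, .inr j => if w = v ∧ (j : ℕ) = 0 then -1 else 0
    | .inr i, .inl w => if w = v ∧ (i : ℕ) = 0 then -1 else 0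
    | .inr i, .inr j =>
        if (i : ℕ) = (j : ℕ) then rest.get i
        else if (i : ℕ) + 1 = (j : ℕ) ∨ (j : ℕ) + 1 = (i : ℕ) then -1 else 0


/-!
`G` is the one-vertex sum, at `v`, of `A` and the tridiagonal matrix `T(c₁, …, c_k)`. Split
row `v` of `G` into its `A`-part and its chain part; the determinant is additive in that row.
With only the `A`-part, the rows indexed by `V` vanish on the chain columns, so the matrix is
block triangular with determinant `det A · |c₂, …, c_k|`. With only the chain part, the rows
indexed by `v` and the chain vanish on the columns of `V ∖ {v}`, giving `det (A ∖ v) · |c₁, …, c_k|`.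
-/

open Matrix

theorem Matrix.det_eq_det_updateRow_add_det_updateRow_sub {n R : Type*} [Fintype n]
    [DecidableEq n] [CommRing R] (M : Matrix n n R) (i : n) (r : n → R) :
    M.det = (M.updateRow i r).det + (M.updateRow i (M i - r)).det := by
  rw [← det_updateRow_add, add_sub_cancel, updateRow_eq_self]

section graftChain

variable {R : Type*} [CommRing R] {V : Type*} [DecidableEq V]

@[simps]
def neSumFinSuccEquiv (v : V) (n : ℕ) : {w // w ≠ v} ⊕ Fin (n + 1) ≃ V ⊕ Fin n where
  toFun := Sum.elim (fun w => .inl w) (Fin.cases (.inl v) .inr)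
  invFun := Sum.elim (fun w => if h : w = v then .inr 0 else .inl ⟨w, h⟩) (fun i => .inr i.succ)
  left_inv := by
    rintro (w | i)
    · simp [w.2]
    · cases i using Fin.cases <;> simp
  right_inv := by
    rintro (w | i)
    · by_cases h : w = v <;> simp [h]
    · simp

variable [Fintype V] (A : Matrix V V R) (v : V) (c₁ : R) (rest : List R)

theorem det_graftChain_updateRow_inl :
    ((graftChain A v c₁ rest).updateRow (.inl v) (Sum.elim (A v) 0)).det
      = A.det * tridet rest := by
  have hblocks : (graftChain A v c₁ rest).updateRow (.inl v) (Sum.elim (A v) 0)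
      = fromBlocks A 0 (graftChain A v c₁ rest).toBlocks₂₁ (triMat rest) := by
    ext (w | i) (w' | j)
    all_goals simp +contextual [graftChain, triMat, updateRow_apply, toBlocks₂₁]
  rw [hblocks, det_fromBlocks_zero₁₂, tridet]

theorem det_graftChain_updateRow_inl_sub :
    ((graftChain A v c₁ rest).updateRow (.inl v)
        (graftChain A v c₁ rest (.inl v) - Sum.elim (A v) 0)).det
      = (A.submatrix (↑) (↑) : Matrix {w // w ≠ v} {w // w ≠ v} R).det * tridet (c₁ :: rest) := by
  rw [← det_submatrix_equiv_self (neSumFinSuccEquiv v rest.length)]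
  set N := ((graftChain A v c₁ rest).updateRow (.inl v)
    (graftChain A v c₁ rest (.inl v) - Sum.elim (A v) 0)).submatrix
    (neSumFinSuccEquiv v rest.length) (neSumFinSuccEquiv v rest.length)
  have hblocks : N = fromBlocks (A.submatrix (↑) (↑)) N.toBlocks₁₂ 0 (triMat (c₁ :: rest)) := by
    ext (w | i) (w' | j)
    · simp [N, graftChain, updateRow_apply, w.2]
    · rfl
    · cases i using Fin.cases <;> simp [N, graftChain, updateRow_apply, w'.2]
    · cases i using Fin.cases <;> cases j using Fin.cases <;>
        simp [N, graftChain, triMat, updateRow_apply]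
  rw [hblocks, det_fromBlocks_zero₂₁, tridet]

end graftChain

/-- The single-hair case of the hairy-graph determinant theorem, in its division-free form:
`det G = |c₂, …, c_k| · det A + |c₁, …, c_k| · det (A ∖ v)`. -/
theorem det_graft_single_chain {R : Type*} [CommRing R] {V : Type*}
    [Fintype V] [DecidableEq V]
    (A : Matrix V V R) (v : V) (c₁ : R) (rest : List R) :
    (graftChain A v c₁ rest).det
      = tridet rest * A.det
        + tridet (c₁ :: rest) *
          (A.submatrix (fun i : {w : V // w ≠ v} => (i : V))
            (fun i : {w : V // w ≠ v} => (i : V))).det := by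
  rw [det_eq_det_updateRow_add_det_updateRow_sub _ (.inl v) (Sum.elim (A v) 0),
    det_graftChain_updateRow_inl, det_graftChain_updateRow_inl_sub]
  ring
end

section
/- The map sending a nonempty list of integers [n₁, …, n_k] with n₁ ≥ 1 and nᵢ ≥ 2 for all i ≥ 2 to the value HJ([n₁, …, n_k]) of its Hirzebruch–Jung continued fraction is well defined and is a bijection onto the set of positive rational numbers. -/
/-!
Every list `a :: L` whose tail has all entries `≥ 2` has `⌈HJ (a :: L)⌉ = a`: its tail has
value `> 1`, so `HJ (a :: L)` lies in `(a - 1, a]`, with equality exactly when `L = []`.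
Hence the head is recovered from the value and injectivity follows by induction. Conversely
`q = ⌈q⌉ - 1 / (⌈q⌉ - q)⁻¹` with `(⌈q⌉ - q)⁻¹ > 1` of smaller denominator when `q ∉ ℤ`, which
builds a preimage by strong induction on the denominator. Positivity of `q` corresponds to
`⌈q⌉ ≥ 1`.
-/

/-- The Hirzebruch–Jung continued fraction of a list of integers, computed in `ℚ`:
`HJ([n]) = n`, `HJ(n :: L) = n − 1 / HJ(L)` (with junk value `0` on the empty list). -/
def hj : List ℤ → ℚ
  | [] => 0
  | [n] => (n : ℚ)
  | n :: L => (n : ℚ) - 1 / hj L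

theorem hj_singleton (a : ℤ) : hj [a] = a := rfl

theorem hj_cons_cons (a b : ℤ) (L : List ℤ) : hj (a :: b :: L) = a - 1 / hj (b :: L) := rfl

theorem one_lt_hj_cons {a : ℤ} {L : List ℤ} (h : ∀ n ∈ a :: L, 2 ≤ n) : 1 < hj (a :: L) := by
  induction L generalizing a with
  | nil => rw [hj_singleton]; exact_mod_cast h a List.mem_cons_self
  | cons b L ih =>
    have hb : 1 < hj (b :: L) := ih fun n hn => h n (.tail a hn)
    have : 1 / hj (b :: L) < 1 := (div_lt_one (by linarith)).2 hb
    have : (2 : ℚ) ≤ a := by exact_mod_cast h a List.mem_cons_self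
    rw [hj_cons_cons]
    linarith

theorem hj_cons_cons_mem_Ioo (a : ℤ) {b : ℤ} {L : List ℤ} (h : ∀ n ∈ b :: L, 2 ≤ n) :
    hj (a :: b :: L) ∈ Set.Ioo ((a : ℚ) - 1) a := by
  have h1 : 1 < hj (b :: L) := one_lt_hj_cons h
  have : 1 / hj (b :: L) < 1 := (div_lt_one (by linarith)).2 h1
  have : 0 < 1 / hj (b :: L) := by positivity
  rw [hj_cons_cons]
  constructor <;> linarith

theorem hj_cons_cons_ne (a : ℤ) {b : ℤ} {L : List ℤ} (h : ∀ n ∈ b :: L, 2 ≤ n) :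
    hj (a :: b :: L) ≠ a :=
  (hj_cons_cons_mem_Ioo a h).2.ne

theorem ceil_hj_cons (a : ℤ) {L : List ℤ} (h : ∀ n ∈ L, 2 ≤ n) : ⌈hj (a :: L)⌉ = a := by
  cases L with
  | nil => exact Int.ceil_intCast a
  | cons b L =>
    obtain ⟨hlo, hhi⟩ := hj_cons_cons_mem_Ioo a h
    exact Int.ceil_eq_iff.2 ⟨hlo, hhi.le⟩

theorem pos_hj_cons {a : ℤ} {L : List ℤ} (ha : 1 ≤ a) (h : ∀ n ∈ L, 2 ≤ n) :
    0 < hj (a :: L) :=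
  Int.ceil_pos.1 (by rw [ceil_hj_cons a h]; omega)

theorem hj_cons_injective {a b : ℤ} {L M : List ℤ} (hL : ∀ n ∈ L, 2 ≤ n)
    (hM : ∀ n ∈ M, 2 ≤ n) (h : hj (a :: L) = hj (b :: M)) : a :: L = b :: M := by
  obtain rfl : a = b := by rw [← ceil_hj_cons a hL, ← ceil_hj_cons b hM, h]
  induction L generalizing a M with
  | nil =>
    cases M with
    | nil => rfl
    | cons c M => exact absurd h.symm (hj_cons_cons_ne a hM)
  | cons c L ih =>
    cases M with
    | nil => exact absurd h (hj_cons_cons_ne a hL)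
    | cons d M =>
      have htail : hj (c :: L) = hj (d :: M) := by
        rw [hj_cons_cons, hj_cons_cons] at h
        simpa using h
      obtain rfl : c = d := by
        rw [← ceil_hj_cons c fun n hn => hL n (.tail c hn),
          ← ceil_hj_cons d fun n hn => hM n (.tail d hn), htail]
      rw [ih (fun n hn => hL n (.tail c hn)) (fun n hn => hM n (.tail c hn)) htail]

theorem Rat.den_inv_lt_den {r : ℚ} (h0 : 0 < r) (h1 : r < 1) : r⁻¹.den < r.den := by
  have hnum : r.num < r.den := Rat.num_lt_denom_iff.2 h1
  have hpos : 0 < r.num := Rat.num_pos.2 h0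
  rw [Rat.den_inv_of_ne_zero h0.ne']
  omega

theorem exists_hj_ceil_cons_eq (q : ℚ) : ∃ L : List ℤ, (∀ n ∈ L, 2 ≤ n) ∧ hj (⌈q⌉ :: L) = q := by
  induction hd : q.den using Nat.strong_induction_on generalizing q with
  | _ d ih =>
    rcases (Int.le_ceil q).eq_or_lt with hq | hq
    · exact ⟨[], by simp, hq.symm⟩
    set r : ℚ := ⌈q⌉ - q with hr
    have hr0 : 0 < r := sub_pos.2 hq
    have hr1 : r < 1 := by linarith [Int.ceil_lt_add_one q]
    have hden : r⁻¹.den < d := by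
      rw [← hd, ← Rat.intCast_sub_den ⌈q⌉ q]
      exact Rat.den_inv_lt_den hr0 hr1
    obtain ⟨L, hL, hLq⟩ := ih _ hden r⁻¹ rfl
    have hc : 2 ≤ ⌈r⁻¹⌉ := Int.lt_ceil.2 (by exact_mod_cast (one_lt_inv₀ hr0).2 hr1)
    refine ⟨⌈r⁻¹⌉ :: L, ?_, ?_⟩
    · rintro n (_ | ⟨_, hn⟩)
      exacts [hc, hL n hn]
    · rw [hj_cons_cons, hLq, one_div, inv_inv, hr]
      ring

/-- The generalized Hirzebruch–Jung correspondence: on the set of nonempty integer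
lists `[n₁, …, n_k]` with `n₁ ≥ 1` and `nᵢ ≥ 2` for all `i ≥ 2`, the continued
fraction is well defined (every nonempty suffix has nonzero value) and `HJ` is a
bijection onto the set of positive rational numbers. -/
theorem hj_bijOn :
    (∀ L : List ℤ, L ∈ {L : List ℤ | L ≠ [] ∧ 1 ≤ L.headI ∧ ∀ n ∈ L.tail, 2 ≤ n} →
      ∀ M, M <:+ L → M ≠ [] → hj M ≠ 0) ∧
    Set.BijOn hj {L : List ℤ | L ≠ [] ∧ 1 ≤ L.headI ∧ ∀ n ∈ L.tail, 2 ≤ n}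
      {q : ℚ | 0 < q} := by
  refine ⟨fun L hL M hM hMne => ?_, fun L hL => ?_, fun L hL M hM h => ?_, fun q hq => ?_⟩
  · obtain ⟨⟨a, L, rfl⟩, ha, hL⟩ := And.imp_left List.exists_cons_of_ne_nil hL
    rcases List.suffix_cons_iff.1 hM with rfl | hM
    · exact (pos_hj_cons ha hL).ne'
    · obtain ⟨b, M, rfl⟩ := List.exists_cons_of_ne_nil hMne
      exact (zero_lt_one.trans (one_lt_hj_cons fun n hn => hL n (hM.subset hn))).ne'
  · obtain ⟨⟨a, L, rfl⟩, ha, hL⟩ := And.imp_left List.exists_cons_of_ne_nil hL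
    exact pos_hj_cons ha hL
  · obtain ⟨⟨a, L, rfl⟩, -, hL⟩ := And.imp_left List.exists_cons_of_ne_nil hL
    obtain ⟨⟨b, M, rfl⟩, -, hM⟩ := And.imp_left List.exists_cons_of_ne_nil hM
    exact hj_cons_injective hL hM h
  · obtain ⟨L, hL, hLq⟩ := exists_hj_ceil_cons_eq q
    exact ⟨⌈q⌉ :: L, ⟨List.cons_ne_nil _ _, Int.one_le_ceil_iff.2 hq, hL⟩, hLq⟩
end
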